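/- arXiv:2504.16008 — 4 statements merged into one kernel-verified Lean document; each statement's English description precedes it below -/
import Mathlib

section
/- Let ρ̂ and σ̂ be independent random D×D complex matrices, each entrywise integrable, with E[ρ̂] = ρ and E[σ̂] = σ, and let O be any fixed D×D complex matrix. Then the random variable Tr( W · (I ⊗ O + O ⊗ I) · (ρ̂ ⊗ σ̂) ) has expectation Tr(O ρ σ) + Tr(O σ ρ); i.e., it is an unbiased estimator of the bilinear functional Tr(O ρ σ) + Tr(O σ ρ). -/
open Matrix MeasureTheory ProbabilityTheory
open scoped Kronecker

/-- The entrywise (product) σ-algebra on matrices. -/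
noncomputable instance matrixMeasurableSpace (D : ℕ) :
    MeasurableSpace (Matrix (Fin D) (Fin D) ℂ) :=
  MeasurableSpace.pi

/-- The swap operator on `ℂ^D ⊗ ℂ^D`: `W_{(a,b),(c,d)} = 1` iff `a = d` and `b = c`. -/
def swapOp (D : ℕ) : Matrix (Fin D × Fin D) (Fin D × Fin D) ℂ :=
  fun p q => if p.1 = q.2 ∧ p.2 = q.1 then 1 else 0

/-- Product of independent integrable complex random variables. -/
lemma aux_indep_integral_complex_mul {Ω : Type*} [MeasurableSpace Ω] {μ : Measure Ω} {X Y : Ω → ℂ}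
    (h : IndepFun X Y μ) (hX : Integrable X μ) (hY : Integrable Y μ) :
    ∫ ω, X ω * Y ω ∂μ = (∫ ω, X ω ∂μ) * ∫ ω, Y ω ∂μ := by
  have hXY : Integrable (fun ω => X ω * Y ω) μ := h.integrable_mul hX hY
  have hXre : Integrable (fun ω => (X ω).re) μ := by simpa using hX.re
  have hXim : Integrable (fun ω => (X ω).im) μ := by simpa using hX.im
  have hYre : Integrable (fun ω => (Y ω).re) μ := by simpa using hY.re
  have hYim : Integrable (fun ω => (Y ω).im) μ := by simpa using hY.im
  have hrr := (h.comp Complex.measurable_re Complex.measurable_re).integral_fun_mul_eq_mul_integral hXre.aestronglyMeasurable hYre.aestronglyMeasurable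
  have hri := (h.comp Complex.measurable_re Complex.measurable_im).integral_fun_mul_eq_mul_integral hXre.aestronglyMeasurable hYim.aestronglyMeasurable
  have hir := (h.comp Complex.measurable_im Complex.measurable_re).integral_fun_mul_eq_mul_integral hXim.aestronglyMeasurable hYre.aestronglyMeasurable
  have hii := (h.comp Complex.measurable_im Complex.measurable_im).integral_fun_mul_eq_mul_integral hXim.aestronglyMeasurable hYim.aestronglyMeasurable
  have irr : Integrable (fun ω => (X ω).re * (Y ω).re) μ :=
    (h.comp Complex.measurable_re Complex.measurable_re).integrable_mul hXre hYre
  have iri : Integrable (fun ω => (X ω).re * (Y ω).im) μ :=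
    (h.comp Complex.measurable_re Complex.measurable_im).integrable_mul hXre hYim
  have iir : Integrable (fun ω => (X ω).im * (Y ω).re) μ :=
    (h.comp Complex.measurable_im Complex.measurable_re).integrable_mul hXim hYre
  have iii : Integrable (fun ω => (X ω).im * (Y ω).im) μ :=
    (h.comp Complex.measurable_im Complex.measurable_im).integrable_mul hXim hYim
  simp only [Function.comp_def, Pi.mul_def] at hrr hri hir hii
  apply Complex.ext
  · have h1 := integral_re hXY
    simp only [RCLike.re_to_complex, Complex.mul_re] at h1 ⊢
    rw [← h1, integral_sub irr iii]
    have e1 := integral_re hX; have e2 := integral_re hY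
    have e3 := integral_im hX; have e4 := integral_im hY
    simp only [RCLike.re_to_complex, RCLike.im_to_complex] at e1 e2 e3 e4
    rw [← e1, ← e2, ← e3, ← e4, ← hrr, ← hii]
  · have h1 := integral_im hXY
    simp only [RCLike.im_to_complex, Complex.mul_im] at h1 ⊢
    rw [← h1, integral_add iri iir]
    have e1 := integral_re hX; have e2 := integral_re hY
    have e3 := integral_im hX; have e4 := integral_im hY
    simp only [RCLike.re_to_complex, RCLike.im_to_complex] at e1 e2 e3 e4
    rw [← e1, ← e2, ← e3, ← e4, ← hri, ← hir]

/-- Expansion of the estimator's trace as a triple sum. -/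
lemma aux_trace_expand (D : ℕ) (O M N : Matrix (Fin D) (Fin D) ℂ) :
    (swapOp D * (((1 : Matrix (Fin D) (Fin D) ℂ) ⊗ₖ O + O ⊗ₖ (1 : Matrix (Fin D) (Fin D) ℂ))
        * (M ⊗ₖ N))).trace
    = ∑ a, ∑ b, ∑ c, (O a c * (M b a * N c b) + O b c * (M c a * N a b)) := by
  simp only [Matrix.trace, Matrix.diag, Matrix.mul_apply, Matrix.add_apply,
    Matrix.kroneckerMap_apply, swapOp, Matrix.one_apply, Fintype.sum_prod_type,
    ite_mul, zero_mul, one_mul, mul_ite, mul_zero, mul_one, Finset.sum_ite_eq,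
    Finset.sum_ite_eq', Finset.mem_univ, if_true, add_mul, Finset.sum_add_distrib,
    Finset.mul_sum, Finset.sum_mul, ite_and]
  congr 1
  refine Finset.sum_congr rfl fun x _ => Finset.sum_congr rfl fun x1 _ => ?_
  rw [Finset.sum_comm]
  simp [Finset.sum_ite_eq]

/-- The triple sum equals the bilinear functional. -/
lemma aux_sum_eq_traces (D : ℕ) (O M N : Matrix (Fin D) (Fin D) ℂ) :
    ∑ a, ∑ b, ∑ c, (O a c * (M b a * N c b) + O b c * (M c a * N a b))
    = (O * M * N).trace + (O * N * M).trace := by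
  have t1 : (O * N * M).trace = ∑ a, ∑ b, ∑ c, O a c * N c b * M b a := by
    simp [Matrix.trace, Matrix.diag, Matrix.mul_apply, Finset.sum_mul]
  have t2 : (O * M * N).trace = ∑ a, ∑ b, ∑ c, O a c * M c b * N b a := by
    simp [Matrix.trace, Matrix.diag, Matrix.mul_apply, Finset.sum_mul]
  rw [t1, t2, add_comm]
  simp only [Finset.sum_add_distrib]
  congr 1
  · exact Finset.sum_congr rfl fun a _ => Finset.sum_congr rfl fun b _ =>
      Finset.sum_congr rfl fun c _ => by ring
  · rw [Finset.sum_comm]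
    exact Finset.sum_congr rfl fun a _ => Finset.sum_congr rfl fun b _ =>
      Finset.sum_congr rfl fun c _ => by ring

lemma aux_integral_triple_sum {Ω : Type*} [MeasurableSpace Ω] (μ : Measure Ω) {n : ℕ}
    (f : Fin n → Fin n → Fin n → Ω → ℂ) (hf : ∀ a b c, Integrable (f a b c) μ) :
    ∫ ω, ∑ a, ∑ b, ∑ c, f a b c ω ∂μ = ∑ a, ∑ b, ∑ c, ∫ ω, f a b c ω ∂μ := by
  rw [integral_finset_sum _ fun a _ => integrable_finset_sum _ fun b _ =>
    integrable_finset_sum _ fun c _ => hf a b c]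
  refine Finset.sum_congr rfl fun a _ => ?_
  rw [integral_finset_sum _ fun b _ => integrable_finset_sum _ fun c _ => hf a b c]
  exact Finset.sum_congr rfl fun b _ => integral_finset_sum _ fun c _ => hf a b c

/-- For independent entrywise-integrable random matrices `ρ̂, σ̂` with means `ρ, σ`,
the random variable `Tr(W (I ⊗ O + O ⊗ I)(ρ̂ ⊗ σ̂))` is an unbiased estimator of
the bilinear functional `Tr(Oρσ) + Tr(Oσρ)`. -/
theorem bilinear_shadow_unbiased
    (D : ℕ)
    (Ω : Type*) [MeasurableSpace Ω] (μ : Measure Ω) [IsProbabilityMeasure μ]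
    (ρhat σhat : Ω → Matrix (Fin D) (Fin D) ℂ)
    (hindep : IndepFun ρhat σhat μ)
    (hintρ : ∀ i j : Fin D, Integrable (fun ω => ρhat ω i j) μ)
    (hintσ : ∀ i j : Fin D, Integrable (fun ω => σhat ω i j) μ)
    (ρ σ : Matrix (Fin D) (Fin D) ℂ)
    (hmeanρ : ∀ i j : Fin D, (∫ ω, ρhat ω i j ∂μ) = ρ i j)
    (hmeanσ : ∀ i j : Fin D, (∫ ω, σhat ω i j ∂μ) = σ i j)
    (O : Matrix (Fin D) (Fin D) ℂ) :
    (∫ ω, (swapOp D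
        * (((1 : Matrix (Fin D) (Fin D) ℂ) ⊗ₖ O + O ⊗ₖ (1 : Matrix (Fin D) (Fin D) ℂ))
          * (ρhat ω ⊗ₖ σhat ω))).trace ∂μ)
      = (O * ρ * σ).trace + (O * σ * ρ).trace := by
  have hmeas : ∀ i j : Fin D, Measurable (fun A : Matrix (Fin D) (Fin D) ℂ => A i j) :=
    fun i j => (measurable_pi_apply j).comp (measurable_pi_apply i)
  have hIE : ∀ i j k l : Fin D,
      IndepFun (fun ω => ρhat ω i j) (fun ω => σhat ω k l) μ :=
    fun i j k l => hindep.comp (hmeas i j) (hmeas k l)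
  have hprod : ∀ i j k l : Fin D, Integrable (fun ω => ρhat ω i j * σhat ω k l) μ :=
    fun i j k l => (hIE i j k l).integrable_mul (hintρ i j) (hintσ k l)
  have key : ∀ i j k l : Fin D, ∫ ω, ρhat ω i j * σhat ω k l ∂μ = ρ i j * σ k l := by
    intro i j k l
    rw [aux_indep_integral_complex_mul (hIE i j k l) (hintρ i j) (hintσ k l),
      hmeanρ, hmeanσ]
  have hterm : ∀ a b c : Fin D, Integrable
      (fun ω => O a c * (ρhat ω b a * σhat ω c b) + O b c * (ρhat ω c a * σhat ω a b)) μ :=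
    fun a b c => ((hprod b a c b).const_mul _).add ((hprod c a a b).const_mul _)
  calc (∫ ω, (swapOp D
        * (((1 : Matrix (Fin D) (Fin D) ℂ) ⊗ₖ O + O ⊗ₖ (1 : Matrix (Fin D) (Fin D) ℂ))
          * (ρhat ω ⊗ₖ σhat ω))).trace ∂μ)
      = ∫ ω, ∑ a, ∑ b, ∑ c, (O a c * (ρhat ω b a * σhat ω c b)
          + O b c * (ρhat ω c a * σhat ω a b)) ∂μ := by
        congr 1; funext ω; exact aux_trace_expand D O (ρhat ω) (σhat ω)
    _ = ∑ a, ∑ b, ∑ c, ∫ ω, (O a c * (ρhat ω b a * σhat ω c b)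
          + O b c * (ρhat ω c a * σhat ω a b)) ∂μ :=
        aux_integral_triple_sum μ _ hterm
    _ = ∑ a, ∑ b, ∑ c, (O a c * (ρ b a * σ c b) + O b c * (ρ c a * σ a b)) := by
        refine Finset.sum_congr rfl fun a _ => Finset.sum_congr rfl fun b _ =>
          Finset.sum_congr rfl fun c _ => ?_
        rw [integral_add ((hprod b a c b).const_mul _) ((hprod c a a b).const_mul _),
          integral_const_mul, integral_const_mul, key, key]
    _ = (O * ρ * σ).trace + (O * σ * ρ).trace := aux_sum_eq_traces D O ρ σ
end

section
/- Let D ≥ 1, let ψ ∈ ℂ^D be a unit vector with ρ = |ψ⟩⟨ψ|, and let O be any D×D complex matrix. Then Tr( (O ⊗ O) · (I ⊗ I + I ⊗ ρ + ρ ⊗ I) · ((D+1)·W − I) · (ρ ⊗ ρ) ) = 3·D·(⟨ψ, O ψ⟩)². -/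
open Matrix Complex
open scoped Kronecker

/-- Standard inner product on `Fin D → ℂ`, conjugate-linear in the first argument. -/
noncomputable def cinner {D : ℕ} (u v : Fin D → ℂ) : ℂ :=
  star u ⬝ᵥ v

/-- The rank-one matrix `|u⟩⟨v|` with entries `u a * conj (v b)`. -/
noncomputable def outer {D : ℕ} (u v : Fin D → ℂ) : Matrix (Fin D) (Fin D) ℂ :=
  Matrix.vecMulVec u (star v)

/-- For a unit vector `ψ` with `ρ = |ψ⟩⟨ψ|`,
`Tr((O⊗O)(I⊗I + I⊗ρ + ρ⊗I)((D+1)W − I)(ρ⊗ρ)) = 3 D ⟨ψ, Oψ⟩²`. -/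
theorem pure_state_shadow_trace
    (D : ℕ) (hD : 1 ≤ D)
    (ψ : Fin D → ℂ) (hψ : cinner ψ ψ = 1)
    (ρ : Matrix (Fin D) (Fin D) ℂ) (hρ : ρ = outer ψ ψ)
    (O : Matrix (Fin D) (Fin D) ℂ) :
    ((O ⊗ₖ O)
        * ((1 : Matrix (Fin D × Fin D) (Fin D × Fin D) ℂ)
            + (1 : Matrix (Fin D) (Fin D) ℂ) ⊗ₖ ρ + ρ ⊗ₖ (1 : Matrix (Fin D) (Fin D) ℂ))
        * (((D : ℂ) + 1) • swapOp D - 1)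
        * (ρ ⊗ₖ ρ)).trace
      = 3 * (D : ℂ) * (cinner ψ (O.mulVec ψ)) ^ 2 := by
  subst hρ
  have hψ' : ∑ k, star (ψ k) * ψ k = 1 := by
    simpa [cinner, dotProduct] using hψ
  have hρ2 : outer ψ ψ * outer ψ ψ = outer ψ ψ := by
    ext a b
    simp only [Matrix.mul_apply, outer, Matrix.vecMulVec_apply, Pi.star_apply]
    calc ∑ k, ψ a * star (ψ k) * (ψ k * star (ψ b))
        = (∑ k, star (ψ k) * ψ k) * (ψ a * star (ψ b)) := by
          rw [Finset.sum_mul]; congr 1; ext k; ring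
      _ = ψ a * star (ψ b) := by rw [hψ', one_mul]
  have hW : swapOp D * (outer ψ ψ ⊗ₖ outer ψ ψ) = outer ψ ψ ⊗ₖ outer ψ ψ := by
    ext ⟨a, b⟩ ⟨c, d⟩
    simp only [Matrix.mul_apply, swapOp, outer, Matrix.kroneckerMap_apply,
      Matrix.vecMulVec_apply, Pi.star_apply, Fintype.sum_prod_type, ite_and,
      ite_mul, zero_mul, one_mul, Finset.sum_ite_eq, Finset.sum_ite_eq',
      Finset.mem_univ, if_true]
    ring
  have htr : (O * outer ψ ψ).trace = cinner ψ (O.mulVec ψ) := by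
    simp only [Matrix.trace, Matrix.diag, Matrix.mul_apply, outer,
      Matrix.vecMulVec_apply, Pi.star_apply, cinner, dotProduct, Matrix.mulVec,
      Finset.mul_sum]
    exact Finset.sum_congr rfl fun a _ => Finset.sum_congr rfl fun b _ => by ring
  set ρ := outer ψ ψ
  have step1 : (((D : ℂ) + 1) • swapOp D - 1) * (ρ ⊗ₖ ρ) = (D : ℂ) • (ρ ⊗ₖ ρ) := by
    rw [sub_mul, smul_mul_assoc, hW, one_mul, add_smul, one_smul, add_sub_cancel_right]
  have step2 : ((1 : Matrix (Fin D × Fin D) (Fin D × Fin D) ℂ)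
      + (1 : Matrix (Fin D) (Fin D) ℂ) ⊗ₖ ρ + ρ ⊗ₖ (1 : Matrix (Fin D) (Fin D) ℂ))
      * (ρ ⊗ₖ ρ) = (3 : ℂ) • (ρ ⊗ₖ ρ) := by
    have e1 : ((1 : Matrix (Fin D) (Fin D) ℂ) ⊗ₖ ρ) * (ρ ⊗ₖ ρ) = ρ ⊗ₖ ρ := by
      rw [← Matrix.mul_kronecker_mul, one_mul, hρ2]
    have e2 : (ρ ⊗ₖ (1 : Matrix (Fin D) (Fin D) ℂ)) * (ρ ⊗ₖ ρ) = ρ ⊗ₖ ρ := by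
      rw [← Matrix.mul_kronecker_mul, one_mul, hρ2]
    rw [add_mul, add_mul, one_mul, e1, e2]
    module
  rw [Matrix.mul_assoc, Matrix.mul_assoc, step1, Matrix.mul_smul, step2, smul_smul,
    Matrix.mul_smul, Matrix.trace_smul, ← Matrix.mul_kronecker_mul,
    Matrix.trace_kronecker, htr, smul_eq_mul]
  ring
end

section
/- Let ψ ∈ ℂ^D be a unit vector with projector P = |ψ⟩⟨ψ|, let ρ_e be a positive semidefinite Hermitian D×D matrix with Tr(ρ_e) = 1 and ρ_e ψ = 0, let 0 ≤ ε < 1, set ρ = (1 − ε)·P + ε·ρ_e, and let m ≥ 1 be an integer. Then Tr(ρ^m) = (1 − ε)^m + ε^m · Tr(ρ_e^m) > 0 and, for every D×D complex matrix O, Tr(O ρ^m)/Tr(ρ^m) = ((1 − ε)^m · ⟨ψ, O ψ⟩ + ε^m · Tr(O ρ_e^m)) / ((1 − ε)^m + ε^m · Tr(ρ_e^m)). -/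
open Matrix Complex
open scoped ComplexOrder

lemma psd_trace_nonneg {D : ℕ} (A : Matrix (Fin D) (Fin D) ℂ) (hA : A.PosSemidef) :
    0 ≤ A.trace := by
  rw [Matrix.trace]
  apply Finset.sum_nonneg
  intro i _
  have h := hA.dotProduct_mulVec_nonneg (Pi.single i 1)
  simpa [dotProduct, Matrix.mulVec_single, Pi.single_apply, apply_ite,
    Finset.sum_ite_eq'] using h

/-- For a noisy state `ρ = (1−ε)P + ε ρ_e` with `P = |ψ⟩⟨ψ|`, `ψ` a unit vector,
`ρ_e` a positive semidefinite density matrix with `ρ_e ψ = 0`, and `0 ≤ ε < 1`: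
`Tr(ρ^m) = (1−ε)^m + ε^m Tr(ρ_e^m)` is (real and) positive, and for every `O`,
`Tr(O ρ^m)/Tr(ρ^m) = ((1−ε)^m ⟨ψ, Oψ⟩ + ε^m Tr(O ρ_e^m))/((1−ε)^m + ε^m Tr(ρ_e^m))`. -/
theorem shadow_distillation_ratio
    (D : ℕ) (ψ : Fin D → ℂ) (hψ : cinner ψ ψ = 1)
    (P : Matrix (Fin D) (Fin D) ℂ) (hP : P = outer ψ ψ)
    (ρe : Matrix (Fin D) (Fin D) ℂ) (hρe : ρe.PosSemidef)
    (htr : ρe.trace = 1) (hker : ρe.mulVec ψ = 0)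
    (ε : ℝ) (hε0 : 0 ≤ ε) (hε1 : ε < 1)
    (ρ : Matrix (Fin D) (Fin D) ℂ)
    (hρ : ρ = ((1 - ε : ℝ) : ℂ) • P + ((ε : ℝ) : ℂ) • ρe)
    (m : ℕ) (hm : 1 ≤ m) :
    (ρ ^ m).trace = (((1 - ε : ℝ) : ℂ)) ^ m + (((ε : ℝ) : ℂ)) ^ m * (ρe ^ m).trace ∧
      0 < ((ρ ^ m).trace).re ∧ ((ρ ^ m).trace).im = 0 ∧
      ∀ O : Matrix (Fin D) (Fin D) ℂ,
        (O * ρ ^ m).trace / (ρ ^ m).trace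
          = ((((1 - ε : ℝ) : ℂ)) ^ m * cinner ψ (O.mulVec ψ)
              + (((ε : ℝ) : ℂ)) ^ m * (O * ρe ^ m).trace)
            / ((((1 - ε : ℝ) : ℂ)) ^ m + (((ε : ℝ) : ℂ)) ^ m * (ρe ^ m).trace) := by
  set c : ℂ := ((1 - ε : ℝ) : ℂ) with hc
  set e : ℂ := ((ε : ℝ) : ℂ) with he
  -- basic algebraic facts
  have hcs : ∀ b : Fin D, ∑ a, star ψ a * ψ a * star ψ b = star ψ b := by
    intro b
    have : (∑ a, star ψ a * ψ a) = 1 := hψ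
    rw [← Finset.sum_mul, this, one_mul]
  have hPP : P * P = P := by
    subst hP
    ext a b
    simp only [outer, Matrix.mul_apply, Matrix.vecMulVec_apply, Pi.star_apply]
    calc ∑ c, ψ a * star ψ c * (ψ c * star ψ b)
        = ψ a * ∑ c, star ψ c * ψ c * star ψ b := by
          rw [Finset.mul_sum]; congr 1; ext c; ring
      _ = ψ a * star ψ b := by rw [hcs]
  have hvm : Matrix.vecMul (star ψ) ρe = 0 := by
    have h1 : star (ρe.mulVec ψ) = 0 := by rw [hker]; simp
    rwa [Matrix.star_mulVec, hρe.isHermitian.eq] at h1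
  have hPe : P * ρe = 0 := by
    subst hP
    ext a b
    simp only [outer, Matrix.mul_apply, Matrix.vecMulVec_apply, Pi.star_apply,
      Matrix.zero_apply]
    have : ∑ c, star ψ c * ρe c b = 0 := congrFun hvm b
    calc ∑ c, ψ a * star ψ c * ρe c b
        = ψ a * ∑ c, star ψ c * ρe c b := by rw [Finset.mul_sum]; congr 1; ext c; ring
      _ = 0 := by rw [this, mul_zero]
  have heP : ρe * P = 0 := by
    subst hP
    ext a b
    simp only [outer, Matrix.mul_apply, Matrix.vecMulVec_apply, Pi.star_apply,
      Matrix.zero_apply]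
    have : ∑ c, ρe a c * ψ c = 0 := congrFun hker a
    calc ∑ c, ρe a c * (ψ c * star ψ b)
        = (∑ c, ρe a c * ψ c) * star ψ b := by rw [Finset.sum_mul]; congr 1; ext c; ring
      _ = 0 := by rw [this, zero_mul]
  have heP' : ∀ n, 1 ≤ n → ρe ^ n * P = 0 := by
    intro n hn
    obtain ⟨k, rfl⟩ := Nat.exists_eq_add_of_le hn
    rw [add_comm, pow_succ, mul_assoc, heP, Matrix.mul_zero]
  have hPe' : ∀ n, 1 ≤ n → P * ρe ^ n = 0 := by
    intro n hn
    obtain ⟨k, rfl⟩ := Nat.exists_eq_add_of_le hn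
    rw [add_comm, pow_succ', ← mul_assoc, hPe, Matrix.zero_mul]
  -- the key power formula
  have hpow : ρ ^ m = c ^ m • P + e ^ m • ρe ^ m := by
    induction m, hm using Nat.le_induction with
    | base => simpa [pow_one] using hρ
    | succ n hn ih =>
      rw [pow_succ, ih, hρ]
      simp only [Matrix.add_mul, Matrix.mul_add, Matrix.smul_mul, Matrix.mul_smul,
        hPP, hPe, heP' n hn, smul_zero, add_zero, zero_add, smul_smul, ← pow_succ]
      rw [pow_succ c n, pow_succ e n, mul_comm c, mul_comm e]
  -- trace of P
  have htrP : P.trace = 1 := by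
    subst hP
    rw [Matrix.trace]
    calc ∑ a, (Matrix.vecMulVec ψ (star ψ)).diag a
        = ∑ a, star ψ a * ψ a := by
          apply Finset.sum_congr rfl; intro a _
          simp [Matrix.diag, Matrix.vecMulVec_apply, mul_comm]
      _ = 1 := hψ
  -- trace of O * P
  have htrOP : ∀ O : Matrix (Fin D) (Fin D) ℂ, (O * P).trace = cinner ψ (O.mulVec ψ) := by
    intro O
    subst hP
    rw [Matrix.trace, cinner]
    simp only [Matrix.diag, Matrix.mul_apply, outer, Matrix.vecMulVec_apply, Pi.star_apply,
      dotProduct, Matrix.mulVec, dotProduct]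
    apply Finset.sum_congr rfl
    intro a _
    rw [Finset.mul_sum]
    apply Finset.sum_congr rfl
    intro b _
    ring
  have htrace : (ρ ^ m).trace = c ^ m + e ^ m * (ρe ^ m).trace := by
    rw [hpow, Matrix.trace_add, Matrix.trace_smul, Matrix.trace_smul, htrP, smul_eq_mul,
      smul_eq_mul, mul_one]
  -- positivity
  have htre : 0 ≤ (ρe ^ m).trace := psd_trace_nonneg _ (hρe.pow m)
  have htre_re : 0 ≤ ((ρe ^ m).trace).re := by
    rw [Complex.le_def] at htre; exact htre.1
  have htre_im : ((ρe ^ m).trace).im = 0 := by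
    rw [Complex.le_def] at htre; exact htre.2.symm
  have htrace' : (ρ ^ m).trace
      = ((((1 - ε) ^ m : ℝ)) : ℂ) + (((ε ^ m : ℝ)) : ℂ) * (ρe ^ m).trace := by
    rw [htrace, hc, he]; push_cast; ring
  have hre : ((ρ ^ m).trace).re = (1 - ε) ^ m + ε ^ m * ((ρe ^ m).trace).re := by
    rw [htrace']
    simp only [Complex.add_re, Complex.mul_re, Complex.ofReal_re, Complex.ofReal_im]
    ring
  have him : ((ρ ^ m).trace).im = 0 := by
    rw [htrace']
    simp only [Complex.add_im, Complex.mul_im, Complex.ofReal_im, Complex.ofReal_re, htre_im]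
    ring
  have hpos : 0 < ((ρ ^ m).trace).re := by
    rw [hre]
    have h1 : 0 < (1 - ε) ^ m := pow_pos (by linarith) m
    have h2 : 0 ≤ ε ^ m * ((ρe ^ m).trace).re :=
      mul_nonneg (pow_nonneg hε0 m) htre_re
    linarith
  refine ⟨htrace, hpos, him, ?_⟩
  intro O
  have hnum : (O * ρ ^ m).trace = c ^ m * cinner ψ (O.mulVec ψ) + e ^ m * (O * ρe ^ m).trace := by
    rw [hpow, Matrix.mul_add, Matrix.mul_smul, Matrix.mul_smul, Matrix.trace_add,
      Matrix.trace_smul, Matrix.trace_smul, htrOP O, smul_eq_mul, smul_eq_mul]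
  rw [hnum, htrace]
end

section
/- Let ψ ∈ ℂ^D be a unit vector with projector P = |ψ⟩⟨ψ|, let ρ_e be a positive semidefinite Hermitian D×D matrix with Tr(ρ_e) = 1 and ρ_e ψ = 0, let 0 ≤ ε < 1, set ρ = (1 − ε)·P + ε·ρ_e, and let m ≥ 1 be an integer. Then for every D×D complex matrix O, | Tr(O ρ^m)/Tr(ρ^m) − ⟨ψ, O ψ⟩ | ≤ 2·‖O‖·(ε/(1 − ε))^m, where ‖O‖ denotes the operator (spectral) norm of O. In other words, the shadow-distillation estimator Tr(O ρ^m)/Tr(ρ^m) approximates ⟨ψ, O ψ⟩ with noise-induced bias suppressed exponentially in m. -/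
open Matrix Complex
open scoped ComplexOrder

/-- The operator (spectral) norm of a `D×D` complex matrix, i.e. the norm of the
induced linear operator on the Euclidean space `ℂ^D`. -/
noncomputable def opNorm {D : ℕ} (O : Matrix (Fin D) (Fin D) ℂ) : ℝ :=
  ‖LinearMap.toContinuousLinearMap (Matrix.toEuclideanLin O)‖

section Helpers

variable {D : ℕ} (ψ : Fin D → ℂ)

lemma outer_mul_outer (hψ : cinner ψ ψ = 1) : outer ψ ψ * outer ψ ψ = outer ψ ψ := by
  ext i j
  simp only [outer, Matrix.mul_apply, vecMulVec_apply]
  have : ∑ k, ψ i * star ψ k * (ψ k * star ψ j)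
      = (ψ i * star ψ j) * ∑ k, star ψ k * ψ k := by
    rw [Finset.mul_sum]; congr 1; ext k; ring
  rw [this]
  have h1 : ∑ k, star ψ k * ψ k = 1 := hψ
  rw [h1, mul_one]

lemma trace_mul_outer (O : Matrix (Fin D) (Fin D) ℂ) :
    (O * outer ψ ψ).trace = cinner ψ (O.mulVec ψ) := by
  simp only [Matrix.trace, Matrix.diag, Matrix.mul_apply, outer, vecMulVec_apply,
    cinner, dotProduct, Matrix.mulVec, Pi.star_apply]
  congr 1; ext i; rw [Finset.mul_sum]; congr 1; ext k; ring

lemma trace_outer (hψ : cinner ψ ψ = 1) : (outer ψ ψ).trace = 1 := by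
  calc (outer ψ ψ).trace = (1 * outer ψ ψ).trace := by rw [one_mul]
    _ = cinner ψ ((1 : Matrix (Fin D) (Fin D) ℂ).mulVec ψ) := trace_mul_outer ψ 1
    _ = cinner ψ ψ := by rw [Matrix.one_mulVec]
    _ = 1 := hψ

lemma outer_mul_zero (ρe : Matrix (Fin D) (Fin D) ℂ) (hH : ρe.IsHermitian)
    (hker : ρe.mulVec ψ = 0) : outer ψ ψ * ρe = 0 := by
  have hvm : star ψ ᵥ* ρe = 0 := by
    have := Matrix.star_mulVec ρe ψ
    rw [hker, hH.eq] at this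
    simpa using this.symm
  ext i j
  simp only [outer, Matrix.mul_apply, vecMulVec_apply, Matrix.zero_apply]
  have : ∑ k, ψ i * star ψ k * ρe k j = ψ i * (star ψ ᵥ* ρe) j := by
    simp only [Matrix.vecMul, dotProduct]; rw [Finset.mul_sum]; congr 1; ext k; ring
  rw [this, hvm]; simp

lemma zero_mul_outer (ρe : Matrix (Fin D) (Fin D) ℂ)
    (hker : ρe.mulVec ψ = 0) : ρe * outer ψ ψ = 0 := by
  ext i j
  simp only [outer, Matrix.mul_apply, vecMulVec_apply, Matrix.zero_apply]
  have : ∑ k, ρe i k * (ψ k * star ψ j) = (ρe.mulVec ψ) i * star ψ j := by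
    simp only [Matrix.mulVec, dotProduct]; rw [Finset.sum_mul]; congr 1; ext k; ring
  rw [this, hker]; simp

lemma trace_rhoe_pow (ρe : Matrix (Fin D) (Fin D) ℂ) (hρe : ρe.PosSemidef)
    (htr : ρe.trace = 1) (m : ℕ) (hm : 1 ≤ m) :
    ∃ t : ℝ, 0 ≤ t ∧ t ≤ 1 ∧ (ρe ^ m).trace = (t : ℂ) := by
  have hH := hρe.1
  set d := hH.eigenvalues with hd
  set V : Matrix (Fin D) (Fin D) ℂ := (hH.eigenvectorUnitary : Matrix (Fin D) (Fin D) ℂ)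
    with hV
  have hspec : ρe = V * diagonal (RCLike.ofReal ∘ d) * star V := hH.spectral_theorem
  have hUU : star V * V = 1 := hH.eigenvectorUnitary.prop.1
  have hpow : ∀ n : ℕ, (V * diagonal (RCLike.ofReal ∘ d) * star V) ^ (n+1)
      = V * (diagonal (RCLike.ofReal ∘ d)) ^ (n+1) * star V := by
    intro n
    induction n with
    | zero => simp
    | succ k ih =>
      rw [pow_succ, ih, pow_succ]
      calc V * diagonal (RCLike.ofReal ∘ d) ^ (k + 1) * star V *
            (V * diagonal (RCLike.ofReal ∘ d) * star V)
          = V * diagonal (RCLike.ofReal ∘ d) ^ (k + 1) * (star V * V) *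
            diagonal (RCLike.ofReal ∘ d) * star V := by
            simp only [mul_assoc]
        _ = V * (diagonal (RCLike.ofReal ∘ d) ^ (k + 1) * diagonal (RCLike.ofReal ∘ d)) *
            star V := by rw [hUU]; simp only [mul_one, mul_assoc]
  obtain ⟨n, rfl⟩ : ∃ n, m = n + 1 := ⟨m - 1, by omega⟩
  have htrace : (ρe ^ (n+1)).trace = ∑ i, ((d i : ℂ)) ^ (n+1) := by
    rw [hspec, hpow n, Matrix.trace_mul_comm, ← mul_assoc, hUU, one_mul,
      Matrix.diagonal_pow, Matrix.trace_diagonal]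
    simp [Pi.pow_apply]
  have hd1 : ∑ i, d i = 1 := by
    have : ρe.trace = ((∑ i, d i : ℝ) : ℂ) := by
      rw [hspec, Matrix.trace_mul_comm, ← mul_assoc, hUU, one_mul, Matrix.trace_diagonal]
      push_cast; rfl
    rw [htr] at this
    exact_mod_cast this.symm
  have hnonneg : ∀ i, 0 ≤ d i := hρe.eigenvalues_nonneg
  refine ⟨∑ i, d i ^ (n+1), Finset.sum_nonneg fun i _ => pow_nonneg (hnonneg i) _, ?_, ?_⟩
  · calc ∑ i, d i ^ (n+1) ≤ ∑ i, d i := by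
          refine Finset.sum_le_sum fun i _ => pow_le_of_le_one (hnonneg i) ?_ (by omega)
          calc d i ≤ ∑ j, d j := Finset.single_le_sum (fun j _ => hnonneg j) (Finset.mem_univ i)
            _ = 1 := hd1
      _ = 1 := hd1
  · rw [htrace]; push_cast; rfl

lemma cinner_self (u : Fin D → ℂ) :
    cinner u u = ((∑ i, Complex.normSq (u i) : ℝ) : ℂ) := by
  simp only [cinner, dotProduct, Pi.star_apply, Complex.ofReal_sum]
  congr 1; ext i
  rw [Complex.star_def, ← Complex.normSq_eq_conj_mul_self]

lemma norm_sq_eq (u : Fin D → ℂ) :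
    ‖(WithLp.equiv 2 (Fin D → ℂ)).symm u‖ ^ 2 = ∑ i, Complex.normSq (u i) := by
  rw [EuclideanSpace.norm_eq, Real.sq_sqrt (by positivity)]
  congr 1; ext i
  rw [Complex.sq_norm]
  rfl

lemma cinner_mulVec_bound (O : Matrix (Fin D) (Fin D) ℂ) (u : Fin D → ℂ) :
    ‖cinner u (O.mulVec u)‖ ≤ opNorm O * ∑ i, Complex.normSq (u i) := by
  set x : EuclideanSpace ℂ (Fin D) := (WithLp.equiv 2 (Fin D → ℂ)).symm u with hx
  have h1 : cinner u (O.mulVec u) = inner ℂ x (Matrix.toEuclideanLin O x) := by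
    rw [hx, WithLp.equiv_symm_apply, Matrix.toEuclideanLin_toLp]
    simp [cinner, PiLp.inner_apply, dotProduct, RCLike.inner_apply, Matrix.toLin'_apply,
      mul_comm]
  rw [h1, ← norm_sq_eq u]
  calc ‖inner ℂ x (Matrix.toEuclideanLin O x)‖
      = ‖(inner ℂ x (Matrix.toEuclideanLin O x) : ℂ)‖ := rfl
    _ ≤ ‖x‖ * ‖Matrix.toEuclideanLin O x‖ := norm_inner_le_norm x _
    _ ≤ ‖x‖ * (opNorm O * ‖x‖) := by
        refine mul_le_mul_of_nonneg_left ?_ (norm_nonneg x)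
        exact (LinearMap.toContinuousLinearMap (Matrix.toEuclideanLin O)).le_opNorm x
    _ = opNorm O * ‖x‖ ^ 2 := by ring

lemma trace_mul_psd_bound (O B : Matrix (Fin D) (Fin D) ℂ) (hB : B.PosSemidef)
    (t : ℝ) (ht : B.trace = (t : ℂ)) :
    ‖(O * B).trace‖ ≤ opNorm O * t := by
  open scoped MatrixOrder Matrix.Norms.L2Operator in
  obtain ⟨C, hC⟩ := CStarAlgebra.nonneg_iff_eq_star_mul_self.mp hB.nonneg
  rw [Matrix.star_eq_conjTranspose] at hC
  have h2 : (O * B).trace = ∑ i, cinner (fun a => star (C i a))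
      (O.mulVec (fun a => star (C i a))) := by
    rw [hC, ← mul_assoc, Matrix.trace_mul_comm]
    simp only [Matrix.trace, Matrix.diag, Matrix.mul_apply, cinner, dotProduct,
      Matrix.mulVec, Pi.star_apply, star_star, Matrix.conjTranspose_apply]
  have h3 : t = ∑ i, ∑ a, Complex.normSq (C i a) := by
    have : B.trace = ((∑ i, ∑ a, Complex.normSq (C i a) : ℝ) : ℂ) := by
      rw [hC, Matrix.trace_mul_comm]
      simp only [Matrix.trace, Matrix.diag, Matrix.mul_apply, Matrix.conjTranspose_apply,
        Complex.ofReal_sum]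
      congr 1; ext i
      congr 1; ext a
      rw [Complex.star_def, mul_comm, ← Complex.normSq_eq_conj_mul_self]
    rw [ht] at this
    exact_mod_cast this
  rw [h2, h3]
  calc ‖∑ i, cinner (fun a => star (C i a)) (O.mulVec fun a => star (C i a))‖
      ≤ ∑ i, ‖cinner (fun a => star (C i a)) (O.mulVec fun a => star (C i a))‖ := by
        exact norm_sum_le _ _
    _ ≤ ∑ i, opNorm O * ∑ a, Complex.normSq (star (C i a)) := by
        exact Finset.sum_le_sum fun i _ => cinner_mulVec_bound O _
    _ = opNorm O * ∑ i, ∑ a, Complex.normSq (C i a) := by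
        rw [Finset.mul_sum]; congr 1; ext i; congr 1
        · congr 1; ext a; rw [Complex.star_def, Complex.normSq_conj]

end Helpers

/-- Shadow distillation bias bound: for `ρ = (1−ε)|ψ⟩⟨ψ| + ε ρ_e` with `ρ_e` a
density matrix supported away from `ψ` and `0 ≤ ε < 1`,
`|Tr(O ρ^m)/Tr(ρ^m) − ⟨ψ, O ψ⟩| ≤ 2 ‖O‖ (ε/(1−ε))^m`. -/
theorem shadow_distillation_bias_bound
    (D : ℕ) (ψ : Fin D → ℂ) (hψ : cinner ψ ψ = 1)
    (P : Matrix (Fin D) (Fin D) ℂ) (hP : P = outer ψ ψ)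
    (ρe : Matrix (Fin D) (Fin D) ℂ) (hρe : ρe.PosSemidef)
    (htr : ρe.trace = 1) (hker : ρe.mulVec ψ = 0)
    (ε : ℝ) (hε0 : 0 ≤ ε) (hε1 : ε < 1)
    (ρ : Matrix (Fin D) (Fin D) ℂ)
    (hρ : ρ = ((1 - ε : ℝ) : ℂ) • P + ((ε : ℝ) : ℂ) • ρe)
    (m : ℕ) (hm : 1 ≤ m)
    (O : Matrix (Fin D) (Fin D) ℂ) :
    ‖(O * ρ ^ m).trace / (ρ ^ m).trace - cinner ψ (O.mulVec ψ)‖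
      ≤ 2 * opNorm O * (ε / (1 - ε)) ^ m := by
  have hPe : P * ρe = 0 := by rw [hP]; exact outer_mul_zero ψ ρe hρe.1 hker
  have heP : ρe * P = 0 := by rw [hP]; exact zero_mul_outer ψ ρe hker
  have hPP : P * P = P := by rw [hP]; exact outer_mul_outer ψ hψ
  have hePn : ∀ n : ℕ, 1 ≤ n → ρe ^ n * P = 0 := by
    intro n hn
    obtain ⟨k, rfl⟩ : ∃ k, n = k + 1 := ⟨n - 1, by omega⟩
    rw [pow_succ, mul_assoc, heP, mul_zero]
  -- power formula
  have hpowρ : ∀ n : ℕ, 1 ≤ n →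
      ρ ^ n = (((1 - ε) ^ n : ℝ) : ℂ) • P + ((ε ^ n : ℝ) : ℂ) • ρe ^ n := by
    intro n hn
    induction n with
    | zero => omega
    | succ k ih =>
      rcases Nat.eq_or_lt_of_le hn with h1 | h1
      · rw [← h1]
        simp [hρ]
      · have hk : 1 ≤ k := by omega
        rw [pow_succ, ih hk, hρ]
        rw [add_mul, mul_add, mul_add]
        rw [Matrix.smul_mul, Matrix.smul_mul, Matrix.smul_mul, Matrix.smul_mul,
          Matrix.mul_smul, Matrix.mul_smul, Matrix.mul_smul, Matrix.mul_smul]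
        rw [hPP, hPe, hePn k hk, ← pow_succ]
        rw [smul_zero, smul_zero, smul_zero, smul_zero, add_zero, zero_add]
        rw [smul_smul, smul_smul]
        push_cast
        ring_nf
  have hρm := hpowρ m hm
  -- traces
  obtain ⟨t, ht0, ht1, htm⟩ := trace_rhoe_pow ρe hρe htr m hm
  have hPtr : P.trace = 1 := by rw [hP]; exact trace_outer ψ hψ
  have hOP : (O * P).trace = cinner ψ (O.mulVec ψ) := by rw [hP]; exact trace_mul_outer ψ O
  set c : ℂ := cinner ψ (O.mulVec ψ) with hc
  set T : ℂ := (O * ρe ^ m).trace with hT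
  have htrρ : (ρ ^ m).trace = (((1 - ε) ^ m + ε ^ m * t : ℝ) : ℂ) := by
    rw [hρm, Matrix.trace_add, Matrix.trace_smul, Matrix.trace_smul, hPtr, htm]
    simp only [smul_eq_mul]
    push_cast; ring
  have htrOρ : (O * ρ ^ m).trace = (((1 - ε) ^ m : ℝ) : ℂ) * c + ((ε ^ m : ℝ) : ℂ) * T := by
    rw [hρm, mul_add, Matrix.mul_smul, Matrix.mul_smul, Matrix.trace_add,
      Matrix.trace_smul, Matrix.trace_smul, hOP, hT]
    simp [smul_eq_mul]
  -- bounds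
  have hψsum : ∑ i, Complex.normSq (ψ i) = 1 := by
    have := cinner_self ψ
    rw [hψ] at this
    exact_mod_cast this.symm
  have hcb : ‖c‖ ≤ opNorm O := by
    have := cinner_mulVec_bound O ψ
    rwa [hψsum, mul_one] at this
  have hTb : ‖T‖ ≤ opNorm O * t :=
    trace_mul_psd_bound O (ρe ^ m) (hρe.pow m) t htm
  have hA : (0 : ℝ) < (1 - ε) ^ m := pow_pos (by linarith) m
  have hden : (0 : ℝ) < (1 - ε) ^ m + ε ^ m * t := by
    have : 0 ≤ ε ^ m * t := mul_nonneg (pow_nonneg hε0 m) ht0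
    linarith
  have hdenne : (ρ ^ m).trace ≠ 0 := by
    rw [htrρ]
    exact_mod_cast ne_of_gt hden
  have hON : 0 ≤ opNorm O := norm_nonneg _
  -- rewrite the difference
  have hdiff : (O * ρ ^ m).trace / (ρ ^ m).trace - c
      = (((ε ^ m : ℝ) : ℂ) * T - ((ε ^ m : ℝ) : ℂ) * (t : ℂ) * c)
        / (((1 - ε) ^ m + ε ^ m * t : ℝ) : ℂ) := by
    rw [htrOρ, htrρ]
    rw [div_sub' (by exact_mod_cast ne_of_gt hden)]
    congr 1
    push_cast
    ring
  rw [hdiff, norm_div]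
  have habs_den : ‖(((1 - ε) ^ m + ε ^ m * t : ℝ) : ℂ)‖
      = (1 - ε) ^ m + ε ^ m * t := by
    rw [Complex.norm_real, Real.norm_eq_abs, abs_of_pos hden]
  rw [habs_den]
  have hnum : ‖((ε ^ m : ℝ) : ℂ) * T - ((ε ^ m : ℝ) : ℂ) * (t : ℂ) * c‖
      ≤ 2 * opNorm O * (ε ^ m * t) := by
    calc ‖((ε ^ m : ℝ) : ℂ) * T - ((ε ^ m : ℝ) : ℂ) * (t : ℂ) * c‖
        ≤ ‖((ε ^ m : ℝ) : ℂ) * T‖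
          + ‖((ε ^ m : ℝ) : ℂ) * (t : ℂ) * c‖ := by
          exact norm_sub_le _ _
      _ = ε ^ m * ‖T‖ + ε ^ m * t * ‖c‖ := by
          rw [norm_mul, norm_mul, norm_mul, Complex.norm_real, Complex.norm_real, Real.norm_eq_abs, Real.norm_eq_abs,
            _root_.abs_of_nonneg (pow_nonneg hε0 m), _root_.abs_of_nonneg ht0]
      _ ≤ ε ^ m * (opNorm O * t) + ε ^ m * t * opNorm O := by
          have h1 := mul_le_mul_of_nonneg_left hTb (pow_nonneg hε0 m)
          have h2 := mul_le_mul_of_nonneg_left hcb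
            (mul_nonneg (pow_nonneg hε0 m) ht0)
          linarith
      _ = 2 * opNorm O * (ε ^ m * t) := by ring
  calc ‖((ε ^ m : ℝ) : ℂ) * T - ((ε ^ m : ℝ) : ℂ) * (t : ℂ) * c‖
        / ((1 - ε) ^ m + ε ^ m * t)
      ≤ 2 * opNorm O * (ε ^ m * t) / ((1 - ε) ^ m + ε ^ m * t) := by
        gcongr
    _ ≤ 2 * opNorm O * ε ^ m / (1 - ε) ^ m := by
        rw [div_le_div_iff₀ hden hA]
        nlinarith [mul_nonneg (mul_nonneg (mul_nonneg (by norm_num : (0:ℝ) ≤ 2) hON)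
            (pow_nonneg hε0 m)) (mul_nonneg hA.le (by linarith : 0 ≤ 1 - t)),
          mul_nonneg (mul_nonneg (mul_nonneg (by norm_num : (0:ℝ) ≤ 2) hON)
            (pow_nonneg hε0 m)) (mul_nonneg (pow_nonneg hε0 m) ht0)]
    _ = 2 * opNorm O * (ε / (1 - ε)) ^ m := by
        rw [div_pow, mul_div_assoc]
end
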